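/- Define ✠_n = {*L_{n-1}, *R_{n-1}, ..., *L_0, *R_0} for positive integers n, where *L_0 = *L, *R_0 = *R, *L_k = {*L_{k-1},...,*L_0}, *R_k = {*R_{k-1},...,*R_0}. Let G = ✠_{a_1} + ... + ✠_{a_n} + *L_{b_1} + ... + *L_{b_ℓ} + *R_{c_1} + ... + *R_{c_r} with a_1 ≤ ... ≤ a_n positive. Then: if n = 0, o(G) = L when r is even and o(G) = R when r is odd; if n = 1, o(G) = N; if n ≥ 2, then o(G) = P when a_3 ⊕ ... ⊕ a_n ⊕ b_1 ⊕ ... ⊕ b_ℓ ⊕ c_1 ⊕ ... ⊕ c_r = 0 and o(G) = N otherwise (⊕ is bitwise XOR). -/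

import Mathlib

/-- Positions of LR-ending partisan games: two terminals and finite option sets
(represented as lists; set-like behavior is captured by the `Iso` relation). -/
inductive Pos : Type
  | termL : Pos
  | termR : Pos
  | opts : List Pos → Pos

namespace Pos

/-- Valid positions: every non-terminal position has a nonempty set of options. -/
inductive Valid : Pos → Prop
  | termL : Valid termL
  | termR : Valid termR
  | opts : ∀ gs : List Pos, gs ≠ [] → (∀ g ∈ gs, Valid g) → Valid (opts gs)

/-- Disjunctive sum. -/
def sum : Pos → Pos → Pos
  | termL, termL => termL
  | termL, termR => termR
  | termR, termL => termR
  | termR, termR => termL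
  | termL, opts hs => opts (hs.attach.map (fun h => sum termL h.1))
  | termR, opts hs => opts (hs.attach.map (fun h => sum termR h.1))
  | opts gs, termL => opts (gs.attach.map (fun g => sum g.1 termL))
  | opts gs, termR => opts (gs.attach.map (fun g => sum g.1 termR))
  | opts gs, opts hs =>
      opts (gs.attach.map (fun g => sum g.1 (opts hs)) ++
            hs.attach.map (fun h => sum (opts gs) h.1))
termination_by g h => sizeOf g + sizeOf h
decreasing_by
  all_goals
    first
      | (have := List.sizeOf_lt_of_mem h.2; simp_all; omega)
      | (have := List.sizeOf_lt_of_mem g.2; simp_all; omega)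

/-- Conjugate: swap the two kinds of terminal positions. -/
def conj : Pos → Pos
  | termL => termR
  | termR => termL
  | opts gs => opts (gs.attach.map (fun g => conj g.1))
decreasing_by
  have := List.sizeOf_lt_of_mem g.2; simp_all; omega

/-- Isomorphism of game trees (positions viewed as sets of options). -/
def Iso : Pos → Pos → Prop
  | termL, termL => True
  | termR, termR => True
  | opts gs, opts hs =>
      (∀ g ∈ gs.attach, ∃ h ∈ hs.attach, Iso g.1 h.1) ∧
      (∀ h ∈ hs.attach, ∃ g ∈ gs.attach, Iso g.1 h.1)
  | _, _ => False
termination_by g h => sizeOf g + sizeOf h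
decreasing_by
  all_goals
    (have hg := List.sizeOf_lt_of_mem g.2; have hh := List.sizeOf_lt_of_mem h.2;
     simp_all; omega)

inductive Player : Type
  | left : Player
  | right : Player
  deriving DecidableEq

/-- `Wins p b G` : player `p` has a winning strategy from position `G`,
where `b = true` means it is `p`'s turn to move and `b = false` means the
opponent is to move.  A terminal position is won by the player given by
its label, regardless of whose turn it is. -/
inductive Wins : Player → Bool → Pos → Prop
  | termL : ∀ b, Wins Player.left b termL
  | termR : ∀ b, Wins Player.right b termR
  | move : ∀ (p : Player) (gs : List Pos) (g : Pos), g ∈ gs →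
      Wins p false g → Wins p true (opts gs)
  | wait : ∀ (p : Player) (gs : List Pos),
      (∀ g, g ∈ gs → Wins p true g) → Wins p false (opts gs)

inductive Outcome : Type
  | L : Outcome
  | R : Outcome
  | N : Outcome
  | P : Outcome
  deriving DecidableEq

/-- The outcome of a position. -/
noncomputable def outcome (G : Pos) : Outcome := by
  classical
  exact
    if Wins Player.left true G then
      if Wins Player.left false G then Outcome.L else Outcome.N
    else
      if Wins Player.left false G then Outcome.P else Outcome.R

/-- Equivalence of positions: the outcome agrees in every (valid) context. -/
def equiv (G H : Pos) : Prop :=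
  ∀ X : Pos, Valid X → outcome (sum G X) = outcome (sum H X)

end Pos
namespace Pos

mutual
/-- `Ln n` is the position `*L_n`: `*L_0 = *L`, `*L_n = {*L_{n-1}, ..., *L_0}`. -/
def Ln : ℕ → Pos
  | 0 => termL
  | n + 1 => opts (LnList (n + 1))
termination_by n => 2 * n + 1
/-- `LnList n = [*L_{n-1}, ..., *L_0]`. -/
def LnList : ℕ → List Pos
  | 0 => []
  | n + 1 => Ln n :: LnList n
termination_by n => 2 * n
end

mutual
/-- `Rn n` is the position `*R_n`. -/
def Rn : ℕ → Pos
  | 0 => termR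
  | n + 1 => opts (RnList (n + 1))
termination_by n => 2 * n + 1
def RnList : ℕ → List Pos
  | 0 => []
  | n + 1 => Rn n :: RnList n
termination_by n => 2 * n
end

/-- `kome n` is `✠_n = {*L_{n-1}, *R_{n-1}, ..., *L_0, *R_0}` (for `n ≥ 1`). -/
def kome (n : ℕ) : Pos := opts (LnList n ++ RnList n)

mutual
/-- `starAux n` represents `★(n+1)`: `★1 = {*L, *R}`, `★n = {★(n-1),...,★1,*L,*R}`. -/
def starAux : ℕ → Pos
  | 0 => opts [termL, termR]
  | n + 1 => opts (starList (n + 1) ++ [termL, termR])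
termination_by n => 2 * n + 1
/-- `starList n = [★n, ..., ★1]`. -/
def starList : ℕ → List Pos
  | 0 => []
  | n + 1 => starAux n :: starList n
termination_by n => 2 * n
end

/-- `bigstar n` is `★n` (meaningful for `n ≥ 1`). -/
def bigstar (n : ℕ) : Pos := starAux (n - 1)

/-- Sum of a list of positions (`*L` is the empty sum, and `G + *L = G`). -/
def sumList (l : List Pos) : Pos := l.foldr sum termL

/-- Nim-sum (XOR) of a list of naturals. -/
def xorList (l : List ℕ) : ℕ := l.foldr (· ^^^ ·) 0

/-- Minimum excludant of a list of naturals. -/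
noncomputable def mexList (l : List ℕ) : ℕ := sInf {n : ℕ | n ∉ l}

end Pos

/-!
Every summand is a Nim heap that remembers how it ends: `*L_b` and `*R_c` are heaps of sizes `b`
and `c` ending in `*L` resp. `*R`, and `✠_a` is a heap of size `a` whose first move also chooses
the ending. At the end Left wins iff the number of `*R`s is even. So without komes the winner is
already decided, and with a single kome the player to move resolves it into `*L_0` or `*R_0`
according to the parity they need. With at least two komes, leaving a single kome loses, and
the game is Nim on the heaps `a_3, …, a_n, b_i, c_j`: resolving a kome `a` into a heap `j < a`
replaces the Nim heap `a` by `j` or, if `a` is one of the two smallest komes, the Nim heap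
`a_3 ≥ a` by `j`; and every decrease of a Nim heap is realised by a move that leaves at least
two komes. The predicted winner therefore satisfies the recursion defining `Wins`, and agrees
with it by induction on the total size of the summands.
-/

instance : Std.Commutative (α := ℕ) (· ^^^ ·) := ⟨Nat.xor_comm⟩
instance : Std.Associative (α := ℕ) (· ^^^ ·) := ⟨Nat.xor_assoc⟩

lemma List.exists_drop_eq_cons_drop_eraseIdx {α : Type*} [LinearOrder α] {s : List α}
    (hs : s.Pairwise (· ≤ ·)) {n i : ℕ} (hn : n < s.length) (hi : i < s.length) :
    ∃ e, s[i] ≤ e ∧ (n ≤ i → e = s[i]) ∧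
      (s.drop n : Multiset α) = e ::ₘ ((s.eraseIdx i).drop n : List α) := by
  rw [List.eraseIdx_eq_take_drop_succ]
  by_cases hni : n ≤ i
  · refine ⟨s[i], le_rfl, fun _ => rfl, ?_⟩
    have hsplit : s.drop n = (s.take i).drop n ++ s[i] :: s.drop (i + 1) := by
      rw [← List.drop_eq_getElem_cons hi, ← List.drop_append_of_le_length (by simp; omega),
        List.take_append_drop]
    rw [hsplit, List.drop_append_of_le_length (by simp; omega), Multiset.cons_coe,
      Multiset.coe_eq_coe]
    exact List.perm_middle
  · refine ⟨s[n], List.pairwise_iff_getElem.mp hs i n hi hn (by omega),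
      fun h => absurd h hni, ?_⟩
    have hdrop : (s.take i ++ s.drop (i + 1)).drop n = s.drop (n + 1) := by
      rw [List.drop_append, List.drop_eq_nil_of_le (by simp; omega), List.nil_append,
        List.drop_drop, List.length_take_of_le (by omega)]
      congr 1
      omega
    rw [hdrop, List.drop_eq_getElem_cons hn, Multiset.cons_coe]

lemma Multiset.sort_erase_getElem {α : Type*} [LinearOrder α] (K : Multiset α) {i : ℕ}
    (hi : i < K.sort.length) : (K.erase K.sort[i]).sort = K.sort.eraseIdx i := by
  have hcoe : (K.sort.eraseIdx i : Multiset α) = K.erase K.sort[i] := by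
    have h := Multiset.coe_eq_coe.mpr (List.getElem_cons_eraseIdx_perm hi)
    rw [← Multiset.cons_coe, Multiset.sort_eq] at h
    exact (Multiset.erase_cons_head _ _).symm.trans (congrArg (Multiset.erase · _) h)
  rw [← hcoe, Multiset.coe_sort]
  exact List.mergeSort_eq_self (r := (· ≤ ·))
    ((Multiset.pairwise_sort K _).sublist (List.eraseIdx_sublist _ _))

namespace Pos

open Multiset

def nimSum (s : Multiset ℕ) : ℕ := s.fold (· ^^^ ·) 0

@[simp] lemma nimSum_zero : nimSum 0 = 0 := fold_zero _ _

@[simp] lemma nimSum_cons (a : ℕ) (s : Multiset ℕ) : nimSum (a ::ₘ s) = a ^^^ nimSum s :=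
  fold_cons_left _ _ _ _

lemma nimSum_add (s t : Multiset ℕ) : nimSum (s + t) = nimSum s ^^^ nimSum t := by
  simpa [nimSum] using fold_add (fun a b : ℕ => a ^^^ b) 0 0 s t

lemma nimSum_coe (l : List ℕ) : nimSum l = xorList l := coe_fold_r _ _ _

lemma exists_xor_nimSum_lt {s : Multiset ℕ} (h : nimSum s ≠ 0) :
    ∃ u ∈ s, u ^^^ nimSum s < u := by
  -- strengthened so that `Nat.lt_xor_cases` drives the induction
  suffices ∀ a < nimSum s, ∃ u ∈ s, a ^^^ nimSum s ^^^ u < u by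
    simpa [Nat.xor_comm] using this 0 (Nat.pos_of_ne_zero h)
  clear h
  induction s using Multiset.induction_on with
  | empty => simp
  | cons b s ih =>
    intro a ha
    rw [nimSum_cons] at ha ⊢
    rcases Nat.lt_xor_cases ha with hb | hs
    · exact ⟨b, mem_cons_self _ _, by simpa [Nat.xor_comm b, Nat.xor_assoc] using hb⟩
    · obtain ⟨u, hu, hlt⟩ := ih _ hs
      exact ⟨u, mem_cons_of_mem hu, by simpa [Nat.xor_assoc] using hlt⟩

def komeHeaps (K : Multiset ℕ) : Multiset ℕ := (K.sort.drop 2 : List ℕ)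

lemma card_komeHeaps (K : Multiset ℕ) : card (komeHeaps K) = card K - 2 := by
  simp [komeHeaps]

lemma komeHeaps_le (K : Multiset ℕ) : komeHeaps K ≤ K := by
  conv_rhs => rw [← sort_eq K (· ≤ ·)]
  exact coe_le.mpr (List.drop_sublist _ _).subperm

lemma exists_komeHeaps_cons (a : ℕ) {K : Multiset ℕ} (hK : 2 ≤ card K) :
    ∃ e, a ≤ e ∧ komeHeaps (a ::ₘ K) = e ::ₘ komeHeaps K := by
  obtain ⟨i, hi, hai⟩ :=
    List.mem_iff_getElem.mp ((mem_sort (· ≤ ·)).mpr (mem_cons_self a K))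
  have hlen : 2 < (a ::ₘ K).sort.length := by simp; omega
  obtain ⟨e, hle, -, he⟩ :=
    List.exists_drop_eq_cons_drop_eraseIdx (pairwise_sort _ (· ≤ ·)) hlen hi
  refine ⟨e, hai ▸ hle, ?_⟩
  rw [komeHeaps, he, komeHeaps, ← sort_erase_getElem _ hi, hai, erase_cons_head]

lemma komeHeaps_eq_cons_erase {K : Multiset ℕ} {u : ℕ} (hu : u ∈ komeHeaps K) :
    komeHeaps K = u ::ₘ komeHeaps (K.erase u) := by
  obtain ⟨j, hj, hju⟩ := List.mem_iff_getElem.mp (mem_coe.mp hu)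
  rw [List.getElem_drop] at hju
  rw [List.length_drop] at hj
  obtain ⟨e, -, he, hdrop⟩ := List.exists_drop_eq_cons_drop_eraseIdx
    (pairwise_sort K (· ≤ ·)) (n := 2) (i := 2 + j) (by omega) (by omega)
  rw [komeHeaps, hdrop, he (by omega), hju, komeHeaps, ← hju, sort_erase_getElem]

def options : Pos → List Pos
  | opts gs => gs
  | _ => []

def IsTerminal (G : Pos) : Prop := G = termL ∨ G = termR

lemma eq_opts_options {G : Pos} (h : ¬ IsTerminal G) : G = opts (options G) := by
  cases G <;> simp_all [IsTerminal, options]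

lemma wins_termL_iff {p : Player} {b : Bool} : Wins p b termL ↔ p = .left := by
  refine ⟨fun h => ?_, fun h => h ▸ Wins.termL b⟩
  cases h; rfl

lemma wins_termR_iff {p : Player} {b : Bool} : Wins p b termR ↔ p = .right := by
  refine ⟨fun h => ?_, fun h => h ▸ Wins.termR b⟩
  cases h; rfl

lemma wins_true_iff {p : Player} {G : Pos} (hG : ¬ IsTerminal G) :
    Wins p true G ↔ ∃ g ∈ options G, Wins p false g := by
  rw [eq_opts_options hG]
  refine ⟨fun h => ?_, fun ⟨g, hg, hw⟩ => Wins.move p _ g hg hw⟩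
  cases h with
  | move _ _ g hg hw => exact ⟨g, hg, hw⟩

lemma wins_false_iff {p : Player} {G : Pos} (hG : ¬ IsTerminal G) :
    Wins p false G ↔ ∀ g ∈ options G, Wins p true g := by
  rw [eq_opts_options hG]
  refine ⟨fun h => ?_, Wins.wait p _⟩
  cases h with
  | wait _ _ hw => exact hw

lemma isTerminal_sum {G H : Pos} : IsTerminal (sum G H) ↔ IsTerminal G ∧ IsTerminal H := by
  cases G <;> cases H <;> simp [sum, IsTerminal]

lemma mem_options_sum {G H g : Pos} :
    g ∈ options (sum G H) ↔
      (∃ G' ∈ options G, sum G' H = g) ∨ ∃ H' ∈ options H, sum G H' = g := by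
  cases G <;> cases H <;> simp [sum, options]

lemma mem_LnList {n : ℕ} {g : Pos} : g ∈ LnList n ↔ ∃ j < n, Ln j = g := by
  induction n with
  | zero => simp [LnList]
  | succ n ih => rw [LnList, List.mem_cons, ih, Nat.exists_lt_succ_right, or_comm, eq_comm]

lemma mem_RnList {n : ℕ} {g : Pos} : g ∈ RnList n ↔ ∃ j < n, Rn j = g := by
  induction n with
  | zero => simp [RnList]
  | succ n ih => rw [RnList, List.mem_cons, ih, Nat.exists_lt_succ_right, or_comm, eq_comm]

lemma options_Ln (b : ℕ) : options (Ln b) = LnList b := by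
  cases b <;> rw [Ln] <;> simp [options, LnList]

lemma options_Rn (c : ℕ) : options (Rn c) = RnList c := by
  cases c <;> rw [Rn] <;> simp [options, RnList]

/-- `kome n` stands for `✠_(n+1)`, so that every summand is a genuine position. -/
inductive Summand : Type
  | kome (n : ℕ)
  | starL (b : ℕ)
  | starR (c : ℕ)
  deriving DecidableEq

namespace Summand

def toPos : Summand → Pos
  | kome n => Pos.kome (n + 1)
  | starL b => Ln b
  | starR c => Rn c

def size : Summand → ℕ
  | kome n => n + 1
  | starL b => b
  | starR c => c

inductive Move : Summand → Summand → Prop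
  | kome_starL {n j : ℕ} : j < n + 1 → Move (kome n) (starL j)
  | kome_starR {n j : ℕ} : j < n + 1 → Move (kome n) (starR j)
  | starL {b j : ℕ} : j < b → Move (starL b) (starL j)
  | starR {c j : ℕ} : j < c → Move (starR c) (starR j)

lemma Move.size_lt {x y : Summand} (h : x.Move y) : y.size < x.size := by
  cases h <;> assumption

lemma mem_options_toPos {x : Summand} {g : Pos} :
    g ∈ options x.toPos ↔ ∃ y, x.Move y ∧ y.toPos = g := by
  cases x with
  | kome n =>
    rw [toPos, Pos.kome, options, List.mem_append, mem_LnList, mem_RnList]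
    constructor
    · rintro (⟨j, hj, rfl⟩ | ⟨j, hj, rfl⟩)
      exacts [⟨_, .kome_starL hj, rfl⟩, ⟨_, .kome_starR hj, rfl⟩]
    · rintro ⟨_, hj | hj, rfl⟩
      exacts [Or.inl ⟨_, hj, rfl⟩, Or.inr ⟨_, hj, rfl⟩]
  | starL b =>
    rw [toPos, options_Ln, mem_LnList]
    constructor
    · rintro ⟨j, hj, rfl⟩
      exact ⟨_, .starL hj, rfl⟩
    · rintro ⟨_, h, rfl⟩
      cases h with | starL hj => exact ⟨_, hj, rfl⟩
  | starR c =>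
    rw [toPos, options_Rn, mem_RnList]
    constructor
    · rintro ⟨j, hj, rfl⟩
      exact ⟨_, .starR hj, rfl⟩
    · rintro ⟨_, h, rfl⟩
      cases h with | starR hj => exact ⟨_, hj, rfl⟩

lemma isTerminal_toPos_iff {x : Summand} : IsTerminal x.toPos ↔ x = starL 0 ∨ x = starR 0 := by
  cases x with
  | kome n => simp [toPos, Pos.kome, IsTerminal]
  | starL b => cases b <;> simp [toPos, Ln, IsTerminal]
  | starR c => cases c <;> simp [toPos, Rn, IsTerminal]

lemma exists_move {x : Summand} (hx : ¬(x = starL 0 ∨ x = starR 0)) : ∃ y, x.Move y := by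
  cases x with
  | kome n => exact ⟨starL 0, .kome_starL n.succ_pos⟩
  | starL b => exact ⟨starL 0, .starL (Nat.pos_of_ne_zero (by simpa using hx))⟩
  | starR c => exact ⟨starR 0, .starR (Nat.pos_of_ne_zero (by simpa using hx))⟩

def komeSizes : Summand → Multiset ℕ
  | kome n => {n + 1}
  | _ => 0

def starHeaps : Summand → Multiset ℕ
  | kome _ => 0
  | starL b => {b}
  | starR c => {c}

def isStarR : Summand → Bool
  | starR _ => true
  | _ => false

end Summand

def komeSizes (S : Multiset Summand) : Multiset ℕ := S.bind Summand.komeSizes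

def starHeaps (S : Multiset Summand) : Multiset ℕ := S.bind Summand.starHeaps

def numStarR (S : Multiset Summand) : ℕ := S.countP (·.isStarR)

def nimHeaps (S : Multiset Summand) : Multiset ℕ := komeHeaps (komeSizes S) + starHeaps S

def nimValue (S : Multiset Summand) : ℕ := nimSum (nimHeaps S)

@[simp] lemma komeSizes_cons (x : Summand) (S : Multiset Summand) :
    komeSizes (x ::ₘ S) = x.komeSizes + komeSizes S := cons_bind _ _ _

@[simp] lemma starHeaps_cons (x : Summand) (S : Multiset Summand) :
    starHeaps (x ::ₘ S) = x.starHeaps + starHeaps S := cons_bind _ _ _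

@[simp] lemma numStarR_cons (x : Summand) (S : Multiset Summand) :
    numStarR (x ::ₘ S) = numStarR S + if x.isStarR then 1 else 0 := countP_cons _ _ _

def sumOf (l : List Summand) : Pos := sumList (l.map Summand.toPos)

lemma sumOf_cons (x : Summand) (l : List Summand) : sumOf (x :: l) = sum x.toPos (sumOf l) := rfl

inductive SumMove : List Summand → List Summand → Prop
  | head {x y : Summand} {l : List Summand} : x.Move y → SumMove (x :: l) (y :: l)
  | tail {x : Summand} {l l' : List Summand} : SumMove l l' → SumMove (x :: l) (x :: l')

lemma SumMove.size_lt {l l' : List Summand} (h : SumMove l l') :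
    (l'.map Summand.size).sum < (l.map Summand.size).sum := by
  induction h with
  | head hxy => simpa using hxy.size_lt
  | tail _ ih => simpa using ih

lemma mem_options_sumOf {l : List Summand} {g : Pos} :
    g ∈ options (sumOf l) ↔ ∃ l', SumMove l l' ∧ sumOf l' = g := by
  induction l generalizing g with
  | nil =>
    simp only [sumOf, sumList, List.map_nil, List.foldr_nil, options, List.not_mem_nil, false_iff]
    rintro ⟨_, ⟨⟩, _⟩
  | cons x l ih =>
    rw [sumOf_cons, mem_options_sum]
    constructor
    · rintro (⟨G', hG', rfl⟩ | ⟨H', hH', rfl⟩)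
      · obtain ⟨y, hxy, rfl⟩ := Summand.mem_options_toPos.mp hG'
        exact ⟨y :: l, .head hxy, rfl⟩
      · obtain ⟨l', hl', rfl⟩ := ih.mp hH'
        exact ⟨x :: l', .tail hl', rfl⟩
    · rintro ⟨_, hxy | hl', rfl⟩
      · exact Or.inl ⟨_, Summand.mem_options_toPos.mpr ⟨_, hxy, rfl⟩, rfl⟩
      · exact Or.inr ⟨_, ih.mpr ⟨_, hl', rfl⟩, rfl⟩

lemma isTerminal_sumOf_iff {l : List Summand} :
    IsTerminal (sumOf l) ↔ ∀ x ∈ l, x = .starL 0 ∨ x = .starR 0 := by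
  induction l with
  | nil => simp [sumOf, sumList, IsTerminal]
  | cons x l ih =>
    rw [sumOf_cons, isTerminal_sum, Summand.isTerminal_toPos_iff, ih, List.forall_mem_cons]

lemma sumOf_of_isTerminal {l : List Summand} (h : IsTerminal (sumOf l)) :
    komeSizes l = 0 ∧ sumOf l = if Even (numStarR l) then termL else termR := by
  induction l with
  | nil => simp [sumOf, sumList, komeSizes, numStarR]
  | cons x l ih =>
    rw [isTerminal_sumOf_iff, List.forall_mem_cons] at h
    obtain ⟨hl0, hl⟩ := ih (isTerminal_sumOf_iff.mpr h.2)
    rw [← cons_coe, komeSizes_cons, numStarR_cons, sumOf_cons, hl]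
    rcases h.1 with rfl | rfl <;> by_cases he : Even (numStarR l) <;>
      simp [hl0, he, Summand.toPos, Summand.komeSizes, Summand.isStarR, Ln, Rn, sum,
        Nat.even_add_one]

def MultisetMove (S S' : Multiset Summand) : Prop :=
  ∃ x ∈ S, ∃ y, x.Move y ∧ S' = y ::ₘ S.erase x

lemma multisetMove_cons {x y : Summand} (hxy : x.Move y) (R : Multiset Summand) :
    MultisetMove (x ::ₘ R) (y ::ₘ R) :=
  ⟨x, mem_cons_self _ _, y, hxy, by rw [erase_cons_head]⟩

lemma exists_sumMove_iff {l : List Summand} {S' : Multiset Summand} :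
    (∃ l', SumMove l l' ∧ (l' : Multiset Summand) = S') ↔ MultisetMove l S' := by
  constructor
  · rintro ⟨l', hl', rfl⟩
    induction hl' with
    | @head x y l hxy => exact ⟨x, by simp, y, hxy, by simp⟩
    | @tail z l l' _ ih =>
      obtain ⟨x, hx, y, hxy, hl'⟩ := ih
      refine ⟨x, mem_cons_of_mem hx, y, hxy, ?_⟩
      simp only [← cons_coe, hl', erase_cons_tail_of_mem hx, cons_swap]
  · rintro ⟨x, hx, y, hxy, rfl⟩
    induction l with
    | nil => simp at hx
    | cons z l ih =>
      by_cases hxz : x = z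
      · subst hxz
        exact ⟨y :: l, .head hxy, by simp⟩
      · obtain ⟨l'', hl'', hcoe⟩ := ih (by simpa [hxz] using hx)
        refine ⟨z :: l'', .tail hl'', ?_⟩
        simp only [← cons_coe, hcoe, erase_cons_tail _ (Ne.symm hxz), cons_swap]

lemma MultisetMove.star_or_kome {S S' : Multiset Summand} (h : MultisetMove S S') :
    (komeSizes S' = komeSizes S ∧ numStarR S' = numStarR S ∧
      ∃ u v R, v < u ∧ starHeaps S = u ::ₘ R ∧ starHeaps S' = v ::ₘ R) ∨
    ∃ a v, v < a ∧ komeSizes S = a ::ₘ komeSizes S' ∧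
      starHeaps S' = v ::ₘ starHeaps S := by
  obtain ⟨x, hx, y, hxy, rfl⟩ := h
  obtain ⟨R, rfl⟩ : ∃ R, S = x ::ₘ R := ⟨_, (cons_erase hx).symm⟩
  rw [erase_cons_head]
  cases hxy with
  | @kome_starL n j hj =>
    exact Or.inr ⟨n + 1, j, hj, by simp [Summand.komeSizes, Summand.starHeaps]⟩
  | @kome_starR n j hj =>
    exact Or.inr ⟨n + 1, j, hj, by simp [Summand.komeSizes, Summand.starHeaps]⟩
  | @starL b j hj =>
    exact Or.inl ⟨by simp [Summand.komeSizes], by simp [Summand.isStarR],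
      b, j, starHeaps R, hj, by simp [Summand.starHeaps], by simp [Summand.starHeaps]⟩
  | @starR c j hj =>
    exact Or.inl ⟨by simp [Summand.komeSizes], by simp [Summand.isStarR],
      c, j, starHeaps R, hj, by simp [Summand.starHeaps], by simp [Summand.starHeaps]⟩

lemma MultisetMove.card_komeSizes_le {S S' : Multiset Summand} (h : MultisetMove S S') :
    card (komeSizes S) ≤ card (komeSizes S') + 1 := by
  rcases h.star_or_kome with ⟨hK, -⟩ | ⟨a, v, -, hK, -⟩ <;> simp [hK]

lemma MultisetMove.decreases_one_nimHeap {S S' : Multiset Summand} (h : MultisetMove S S')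
    (h2 : 2 ≤ card (komeSizes S')) :
    ∃ u v R, v < u ∧ nimHeaps S = u ::ₘ R ∧ nimHeaps S' = v ::ₘ R := by
  rcases h.star_or_kome with ⟨hK, -, u, v, R, hvu, hS, hS'⟩ | ⟨a, v, hva, hK, hS'⟩
  · exact ⟨u, v, komeHeaps (komeSizes S) + R, hvu, by simp [nimHeaps, hS],
      by simp [nimHeaps, hS', hK]⟩
  · obtain ⟨e, hae, he⟩ := exists_komeHeaps_cons a h2
    exact ⟨e, v, komeHeaps (komeSizes S') + starHeaps S, by omega,
      by simp [nimHeaps, hK, he], by simp [nimHeaps, hS']⟩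

lemma nimValue_ne_zero_of_move {S S' : Multiset Summand} (h : MultisetMove S S')
    (h2 : 2 ≤ card (komeSizes S')) (h0 : nimValue S = 0) : nimValue S' ≠ 0 := by
  obtain ⟨u, v, R, hvu, hS, hS'⟩ := h.decreases_one_nimHeap h2
  rw [nimValue, hS, nimSum_cons, xor_eq_zero_iff] at h0
  rw [nimValue, hS', nimSum_cons, ← h0, Ne, xor_eq_zero_iff]
  omega

lemma exists_kome_of_mem_komeSizes {S : Multiset Summand} {a : ℕ} (h : a ∈ komeSizes S) :
    ∃ n, a = n + 1 ∧ .kome n ∈ S := by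
  obtain ⟨x, hx, hax⟩ := mem_bind.mp h
  cases x <;> simp_all [Summand.komeSizes]

lemma exists_star_of_mem_starHeaps {S : Multiset Summand} {u : ℕ} (h : u ∈ starHeaps S) :
    .starL u ∈ S ∨ .starR u ∈ S := by
  obtain ⟨x, hx, hux⟩ := mem_bind.mp h
  cases x <;> simp_all [Summand.starHeaps]

lemma exists_move_parity {S : Multiset Summand} (h1 : card (komeSizes S) = 1) (q : Prop) :
    ∃ S', MultisetMove S S' ∧ komeSizes S' = 0 ∧ (Even (numStarR S') ↔ q) := by
  obtain ⟨a, ha⟩ := card_eq_one.mp h1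
  obtain ⟨n, -, hn⟩ := exists_kome_of_mem_komeSizes (ha ▸ mem_singleton_self a)
  obtain ⟨R, rfl⟩ : ∃ R, S = .kome n ::ₘ R := ⟨_, (cons_erase hn).symm⟩
  have hR : komeSizes R = 0 := by simpa [Summand.komeSizes] using h1
  by_cases hq : Even (numStarR R) ↔ q
  · exact ⟨_, multisetMove_cons (.kome_starL n.succ_pos) R,
      by simp [hR, Summand.komeSizes], by simpa [Summand.isStarR] using hq⟩
  · exact ⟨_, multisetMove_cons (.kome_starR n.succ_pos) R,
      by simp [hR, Summand.komeSizes],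
      by simpa [Summand.isStarR, Nat.even_add_one] using not_iff.mp hq⟩

lemma exists_move_decreasing_nimHeap {S : Multiset Summand} {u v : ℕ}
    (h2 : 2 ≤ card (komeSizes S)) (hu : u ∈ nimHeaps S) (hvu : v < u) :
    ∃ S', MultisetMove S S' ∧ 2 ≤ card (komeSizes S') ∧
      nimHeaps S' = v ::ₘ (nimHeaps S).erase u := by
  rcases mem_add.mp hu with hk | hs
  · obtain ⟨n, rfl, hn⟩ := exists_kome_of_mem_komeSizes (mem_of_le (komeHeaps_le _) hk)
    obtain ⟨R, rfl⟩ : ∃ R, S = .kome n ::ₘ R := ⟨_, (cons_erase hn).symm⟩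
    have hK : komeSizes (.kome n ::ₘ R) = (n + 1) ::ₘ komeSizes R := by
      simp [Summand.komeSizes]
    have hcard := card_komeHeaps (komeSizes (.kome n ::ₘ R))
    rw [komeHeaps_eq_cons_erase hk, hK, erase_cons_head] at hcard
    refine ⟨_, multisetMove_cons (.kome_starL (j := v) hvu) R, ?_, ?_⟩
    · simp [Summand.komeSizes] at hcard ⊢
      omega
    · rw [nimHeaps, nimHeaps, komeHeaps_eq_cons_erase hk, hK, erase_cons_head]
      simp [Summand.komeSizes, Summand.starHeaps]
  · rcases exists_star_of_mem_starHeaps hs with hx | hx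
    · obtain ⟨R, rfl⟩ : ∃ R, S = .starL u ::ₘ R := ⟨_, (cons_erase hx).symm⟩
      refine ⟨_, multisetMove_cons (.starL hvu) R, by simpa [Summand.komeSizes] using h2, ?_⟩
      simp [nimHeaps, Summand.komeSizes, Summand.starHeaps]
    · obtain ⟨R, rfl⟩ : ∃ R, S = .starR u ::ₘ R := ⟨_, (cons_erase hx).symm⟩
      refine ⟨_, multisetMove_cons (.starR hvu) R, by simpa [Summand.komeSizes] using h2, ?_⟩
      simp [nimHeaps, Summand.komeSizes, Summand.starHeaps]

lemma exists_move_nimValue_eq_zero {S : Multiset Summand} (h2 : 2 ≤ card (komeSizes S))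
    (h0 : nimValue S ≠ 0) :
    ∃ S', MultisetMove S S' ∧ 2 ≤ card (komeSizes S') ∧ nimValue S' = 0 := by
  obtain ⟨u, hu, hlt⟩ := exists_xor_nimSum_lt h0
  obtain ⟨S', hmove, h2', hS'⟩ := exists_move_decreasing_nimHeap h2 hu hlt
  refine ⟨S', hmove, h2', ?_⟩
  have hS : nimValue S = u ^^^ nimSum ((nimHeaps S).erase u) := by
    rw [nimValue, ← nimSum_cons, cons_erase hu]
  rw [nimValue, hS', nimSum_cons, ← nimValue, hS, xor_eq_zero_iff, ← Nat.xor_assoc,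
    Nat.xor_self, Nat.zero_xor]

def PredictedWin (p : Player) (b : Bool) (S : Multiset Summand) : Prop :=
  if card (komeSizes S) = 0 then (p = .left ↔ Even (numStarR S))
  else if card (komeSizes S) = 1 then b = true
  else (b = true ↔ nimValue S ≠ 0)

section PredictedWin

variable {p : Player} {b : Bool} {S : Multiset Summand}

lemma predictedWin_of_komeSizes_eq_zero (h : komeSizes S = 0) :
    PredictedWin p b S ↔ (p = .left ↔ Even (numStarR S)) := by
  simp [PredictedWin, h]

lemma predictedWin_of_card_eq_one (h : card (komeSizes S) = 1) :
    PredictedWin p b S ↔ b = true := by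
  simp [PredictedWin, h]

lemma predictedWin_of_two_le (h : 2 ≤ card (komeSizes S)) :
    PredictedWin p b S ↔ (b = true ↔ nimValue S ≠ 0) := by
  simp [PredictedWin, show card (komeSizes S) ≠ 0 by omega,
    show card (komeSizes S) ≠ 1 by omega]

lemma MultisetMove.predictedWin_iff_of_komeSizes_eq_zero {S' : Multiset Summand} {b' : Bool}
    (h : MultisetMove S S') (h0 : komeSizes S = 0) :
    PredictedWin p b' S' ↔ PredictedWin p b S := by
  rcases h.star_or_kome with ⟨hK, hR, -⟩ | ⟨a, v, -, hK, -⟩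
  · rw [predictedWin_of_komeSizes_eq_zero h0, predictedWin_of_komeSizes_eq_zero (hK.trans h0), hR]
  · simp [h0] at hK

lemma predictedWin_true_iff (hS : ∃ S', MultisetMove S S') :
    PredictedWin p true S ↔ ∃ S', MultisetMove S S' ∧ PredictedWin p false S' := by
  obtain h0 | h1 | h2 : card (komeSizes S) = 0 ∨ card (komeSizes S) = 1 ∨
      2 ≤ card (komeSizes S) := by omega
  · obtain ⟨S', hS'⟩ := hS
    rw [card_eq_zero] at h0
    exact ⟨fun h => ⟨S', hS', (hS'.predictedWin_iff_of_komeSizes_eq_zero h0).mpr h⟩,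
      fun ⟨S', hS', h⟩ => (hS'.predictedWin_iff_of_komeSizes_eq_zero h0).mp h⟩
  · obtain ⟨S', hS', h0, hpar⟩ := exists_move_parity h1 (p = .left)
    simpa [predictedWin_of_card_eq_one h1] using
      ⟨S', hS', (predictedWin_of_komeSizes_eq_zero h0).mpr hpar.symm⟩
  · simp only [predictedWin_of_two_le h2, true_iff]
    refine ⟨fun hX => ?_, fun ⟨S', hS', hW⟩ hX => ?_⟩
    · obtain ⟨S', hS', h2', hX'⟩ := exists_move_nimValue_eq_zero h2 hX
      exact ⟨S', hS', by simp [predictedWin_of_two_le h2', hX']⟩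
    · obtain h1' | h2' : card (komeSizes S') = 1 ∨ 2 ≤ card (komeSizes S') := by
        have := hS'.card_komeSizes_le
        omega
      · simp [predictedWin_of_card_eq_one h1'] at hW
      · simp [predictedWin_of_two_le h2'] at hW
        exact nimValue_ne_zero_of_move hS' h2' hX hW

lemma predictedWin_false_iff (hS : ∃ S', MultisetMove S S') :
    PredictedWin p false S ↔ ∀ S', MultisetMove S S' → PredictedWin p true S' := by
  obtain h0 | h1 | h2 : card (komeSizes S) = 0 ∨ card (komeSizes S) = 1 ∨
      2 ≤ card (komeSizes S) := by omega
  · obtain ⟨S', hS'⟩ := hS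
    rw [card_eq_zero] at h0
    exact ⟨fun h S' hS' => (hS'.predictedWin_iff_of_komeSizes_eq_zero h0).mpr h,
      fun h => (hS'.predictedWin_iff_of_komeSizes_eq_zero h0).mp (h S' hS')⟩
  · obtain ⟨S', hS', h0, hpar⟩ := exists_move_parity h1 (¬ p = .left)
    simp only [predictedWin_of_card_eq_one h1, Bool.false_eq_true, false_iff, not_forall]
    exact ⟨S', hS', by rw [predictedWin_of_komeSizes_eq_zero h0]; tauto⟩
  · simp only [predictedWin_of_two_le h2, Bool.false_eq_true, false_iff, not_not]
    refine ⟨fun hX S' hS' => ?_, fun hW => ?_⟩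
    · obtain h1' | h2' : card (komeSizes S') = 1 ∨ 2 ≤ card (komeSizes S') := by
        have := hS'.card_komeSizes_le
        omega
      · simp [predictedWin_of_card_eq_one h1']
      · simpa [predictedWin_of_two_le h2'] using nimValue_ne_zero_of_move hS' h2' hX
    · by_contra hX
      obtain ⟨S', hS', h2', hX'⟩ := exists_move_nimValue_eq_zero h2 hX
      simpa [predictedWin_of_two_le h2', hX'] using hW S' hS'

end PredictedWin

theorem wins_sumOf_iff (l : List Summand) (p : Player) (b : Bool) :
    Wins p b (sumOf l) ↔ PredictedWin p b l := by
  induction hn : (l.map Summand.size).sum using Nat.strong_induction_on generalizing l b with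
  | _ n ih =>
  have ih' (l' : List Summand) (hl' : SumMove l l') (b : Bool) :
      Wins p b (sumOf l') ↔ PredictedWin p b l' := ih _ (hn ▸ hl'.size_lt) l' b rfl
  by_cases hT : IsTerminal (sumOf l)
  · obtain ⟨hK, hval⟩ := sumOf_of_isTerminal hT
    rw [predictedWin_of_komeSizes_eq_zero hK, hval]
    split_ifs with he <;> cases p <;> simp [wins_termL_iff, wins_termR_iff, he]
  · have hmove : ∃ S', MultisetMove l S' := by
      obtain ⟨x, hx, hx0⟩ : ∃ x ∈ l, ¬(x = .starL 0 ∨ x = .starR 0) := by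
        simpa [isTerminal_sumOf_iff] using hT
      obtain ⟨y, hxy⟩ := Summand.exists_move hx0
      exact ⟨_, x, hx, y, hxy, rfl⟩
    cases b
    · simp only [wins_false_iff hT, predictedWin_false_iff hmove, ← exists_sumMove_iff,
        mem_options_sumOf, forall_exists_index, and_imp, forall_apply_eq_imp_iff₂]
      exact forall₂_congr fun l' hl' => ih' l' hl' true
    · simp only [wins_true_iff hT, predictedWin_true_iff hmove, ← exists_sumMove_iff,
        mem_options_sumOf, exists_exists_and_eq_and]
      exact exists_congr fun l' => and_congr_right fun hl' => ih' l' hl' false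

def summands (as bs cs : List ℕ) : List Summand :=
  as.map (fun a => .kome (a - 1)) ++ bs.map .starL ++ cs.map .starR

section Summands

variable {as bs cs : List ℕ}

lemma sumOf_summands (hpos : ∀ a ∈ as, 1 ≤ a) :
    sumOf (summands as bs cs) = sumList (as.map kome ++ bs.map Ln ++ cs.map Rn) := by
  simp only [sumOf, summands, List.map_append, List.map_map]
  congr 3
  exact List.map_congr_left fun a ha => by simp [Summand.toPos, Nat.sub_add_cancel (hpos a ha)]

lemma komeSizes_summands (hpos : ∀ a ∈ as, 1 ≤ a) : komeSizes (summands as bs cs) = as := by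
  simp only [summands, ← coe_add, ← map_coe, komeSizes, add_bind, bind_map, Summand.komeSizes,
    bind_zero, add_zero, bind_singleton (f := fun a => a - 1 + 1)]
  conv_rhs => rw [← map_id (as : Multiset ℕ)]
  exact map_congr rfl fun a ha => Nat.sub_add_cancel (hpos a ha)

lemma nimValue_summands (hpos : ∀ a ∈ as, 1 ≤ a) (hsort : as.Pairwise (· ≤ ·)) :
    nimValue (summands as bs cs) = xorList (as.drop 2) ^^^ xorList bs ^^^ xorList cs := by
  have hstar : starHeaps (summands as bs cs) = bs + cs := by
    simp [summands, ← coe_add, ← map_coe, starHeaps, add_bind, bind_map, Summand.starHeaps,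
      bind_singleton (f := fun b : ℕ => b)]
  rw [nimValue, nimHeaps, komeSizes_summands hpos, hstar, komeHeaps, coe_sort,
    List.mergeSort_eq_self (r := (· ≤ ·)) hsort, nimSum_add, nimSum_add]
  simp only [nimSum_coe, Nat.xor_assoc]

lemma numStarR_summands : numStarR (summands as bs cs) = cs.length := by
  simp [summands, numStarR, Summand.isStarR, Function.comp_def]

end Summands

end Pos

/-- the outcome of `✠_{a_1} + ⋯ + ✠_{a_n} + *L_{b_1} + ⋯ + *L_{b_ℓ}
+ *R_{c_1} + ⋯ + *R_{c_r}` with `0 < a_1 ≤ ⋯ ≤ a_n`. -/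
theorem kome_sum_outcome (as bs cs : List ℕ)
    (hsort : List.Pairwise (· ≤ ·) as) (hpos : ∀ a ∈ as, 1 ≤ a)
    (G : Pos) (hG : G = Pos.sumList (as.map Pos.kome ++ bs.map Pos.Ln ++ cs.map Pos.Rn)) :
    (as = [] → (Even cs.length → Pos.outcome G = Pos.Outcome.L) ∧
               (¬ Even cs.length → Pos.outcome G = Pos.Outcome.R)) ∧
    (as.length = 1 → Pos.outcome G = Pos.Outcome.N) ∧
    (2 ≤ as.length →
      (Pos.xorList (as.drop 2) ^^^ Pos.xorList bs ^^^ Pos.xorList cs = 0 →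
        Pos.outcome G = Pos.Outcome.P) ∧
      (Pos.xorList (as.drop 2) ^^^ Pos.xorList bs ^^^ Pos.xorList cs ≠ 0 →
        Pos.outcome G = Pos.Outcome.N)) := by
  open Pos in
  have hwins (b : Bool) : Wins .left b G ↔ PredictedWin .left b (summands as bs cs) := by
    rw [hG, ← sumOf_summands hpos]
    exact wins_sumOf_iff _ _ b
  have hcard : Multiset.card (komeSizes (summands as bs cs)) = as.length := by
    rw [komeSizes_summands hpos, Multiset.coe_card]
  have hX := nimValue_summands (bs := bs) (cs := cs) hpos hsort
  refine ⟨?_, fun h1 => ?_, fun h2 => ⟨fun hx => ?_, fun hx => ?_⟩⟩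
  · rintro rfl
    constructor <;> intro he <;>
      simp [outcome, hwins, PredictedWin, hcard, numStarR_summands, he]
  · simp [outcome, hwins, predictedWin_of_card_eq_one (hcard.trans h1)]
  all_goals simp [outcome, hwins, predictedWin_of_two_le (hcard ▸ h2), hX, hx]
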